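/- For Z standard normal and any real α, the conditional variance Var(Z | Z > α) = 1 − λ(α)(λ(α) − α), where λ(α) = φ(α)/(1 − Φ(α)); moreover this quantity lies strictly between 0 and 1. -/

import Mathlib

/-!
Integrating by parts against `φ' = -x φ` gives `∫_α^∞ z φ = φ(α)` and
`∫_α^∞ z² φ = (1 - Φ(α)) + α φ(α)`, so with `S = 1 - Φ(α)` the conditional variance is
`1 + αλ - λ²`. It is positive because `S (1 + αλ - λ²) = ∫_α^∞ (z - λ)² φ`, and it is below `1`
because `λ > 0` and `S (λ - α) = ∫_α^∞ (z - α) φ > 0`.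
-/

open MeasureTheory ProbabilityTheory Set

/-- standard normal density -/
noncomputable def phi (x : ℝ) : ℝ := (Real.sqrt (2 * Real.pi))⁻¹ * Real.exp (-x ^ 2 / 2)

/-- standard normal CDF -/
noncomputable def Phi (x : ℝ) : ℝ := ∫ u in Iio x, phi u

/-- inverse Mills ratio -/
noncomputable def lam (α : ℝ) : ℝ := phi α / (1 - Phi α)

lemma gaussianPDFReal_zero_one : gaussianPDFReal 0 1 = phi := by
  ext x
  simp only [gaussianPDFReal, phi, NNReal.coe_one, mul_one, sub_zero]

lemma phi_pos (x : ℝ) : 0 < phi x := by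
  unfold phi
  positivity

lemma hasDerivAt_phi (x : ℝ) : HasDerivAt phi (-(x * phi x)) x := by
  have h : HasDerivAt (fun y : ℝ => -y ^ 2 / 2) (-x) x :=
    ((hasDerivAt_pow 2 x).neg.div_const 2).congr_deriv (by push_cast; ring)
  exact (h.exp.const_mul _).congr_deriv (by unfold phi; ring)

lemma integrable_pow_mul_phi (n : ℕ) : Integrable fun x => x ^ n * phi x := by
  have h := (integrable_rpow_mul_exp_neg_mul_sq (b := 1 / 2) (by norm_num)
    (neg_one_lt_zero.trans_le (Nat.cast_nonneg n))).const_mul (Real.sqrt (2 * Real.pi))⁻¹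
  refine h.congr (ae_of_all _ fun x => ?_)
  simp only [Real.rpow_natCast, phi]
  ring_nf

lemma integrable_phi : Integrable phi := by
  simpa using integrable_pow_mul_phi 0

lemma integrable_mul_phi : Integrable fun x => x * phi x := by
  simpa using integrable_pow_mul_phi 1

lemma integral_Ioi_of_hasDerivAt_of_integrableOn {f f' : ℝ → ℝ} {a : ℝ}
    (hderiv : ∀ x ∈ Ici a, HasDerivAt f (f' x) x) (hf : IntegrableOn f (Ioi a))
    (hf' : IntegrableOn f' (Ioi a)) : ∫ x in Ioi a, f' x = -f a := by
  have hlim := tendsto_zero_of_hasDerivAt_of_integrableOn_Ioi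
    (fun x hx => hderiv x (mem_Ici_of_Ioi hx)) hf' hf
  simpa using integral_Ioi_of_hasDerivAt_of_tendsto' hderiv hf' hlim

lemma integral_Ioi_phi (α : ℝ) : ∫ x in Ioi α, phi x = 1 - Phi α := by
  have htotal : ∫ x, phi x = 1 := by
    rw [← gaussianPDFReal_zero_one]
    exact integral_gaussianPDFReal_eq_one 0 one_ne_zero
  have hsplit := intervalIntegral.integral_Iic_add_Ioi integrable_phi.integrableOn
    integrable_phi.integrableOn (b := α)
  rw [htotal, setIntegral_congr_set Iio_ae_eq_Iic.symm] at hsplit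
  rw [Phi]
  linarith

lemma integral_Ioi_mul_phi (α : ℝ) : ∫ x in Ioi α, x * phi x = phi α := by
  have h := integral_Ioi_of_hasDerivAt_of_integrableOn (a := α) (fun x _ => hasDerivAt_phi x)
    integrable_phi.integrableOn integrable_mul_phi.neg.integrableOn
  rw [integral_neg] at h
  linarith

lemma integral_Ioi_sq_mul_phi (α : ℝ) :
    ∫ x in Ioi α, x ^ 2 * phi x = (1 - Phi α) + α * phi α := by
  have hderiv (x : ℝ) : HasDerivAt (fun y => y * phi y) (phi x - x ^ 2 * phi x) x :=
    ((hasDerivAt_id x).mul (hasDerivAt_phi x)).congr_deriv (by simp only [id_eq]; ring)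
  have h := integral_Ioi_of_hasDerivAt_of_integrableOn (a := α) (fun x _ => hderiv x)
    integrable_mul_phi.integrableOn (integrable_phi.sub (integrable_pow_mul_phi 2)).integrableOn
  rw [integral_sub integrable_phi.integrableOn (integrable_pow_mul_phi 2).integrableOn,
    integral_Ioi_phi] at h
  linarith

lemma integrable_sq_sub_mul_phi (m : ℝ) : Integrable fun x => (x - m) ^ 2 * phi x := by
  refine (((integrable_pow_mul_phi 2).sub (integrable_mul_phi.const_mul (2 * m))).add
    (integrable_phi.const_mul (m ^ 2))).congr (ae_of_all _ fun x => ?_)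
  simp only [Pi.add_apply, Pi.sub_apply]
  ring

lemma integral_Ioi_sq_sub_mul_phi (α m : ℝ) :
    ∫ x in Ioi α, (x - m) ^ 2 * phi x
      = (1 - Phi α) + α * phi α - 2 * m * phi α + m ^ 2 * (1 - Phi α) := by
  have hexpand : (fun x => (x - m) ^ 2 * phi x)
      = fun x => x ^ 2 * phi x - 2 * m * (x * phi x) + m ^ 2 * phi x := by
    ext x
    ring
  have h₂ := (integrable_pow_mul_phi 2).integrableOn (s := Ioi α)
  have h₁ := (integrable_mul_phi.const_mul (2 * m)).integrableOn (s := Ioi α)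
  have h₀ := (integrable_phi.const_mul (m ^ 2)).integrableOn (s := Ioi α)
  rw [hexpand, integral_add ?_ h₀, integral_sub h₂ h₁, integral_const_mul,
    integral_const_mul, integral_Ioi_sq_mul_phi, integral_Ioi_mul_phi, integral_Ioi_phi]
  exact h₂.sub h₁

lemma integral_pos_of_ae_pos {Ω : Type*} [MeasurableSpace Ω] {μ : Measure Ω} [NeZero μ]
    {f : Ω → ℝ} (hfi : Integrable f μ) (hf : ∀ᵐ x ∂μ, 0 < f x) : 0 < ∫ x, f x ∂μ := by
  rw [integral_pos_iff_support_of_nonneg_ae (hf.mono fun _ h => h.le) hfi]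
  refine pos_iff_ne_zero.2 fun h0 => ?_
  obtain ⟨x, hx, hfx⟩ := ((measure_eq_zero_iff_ae_notMem.1 h0).and hf).exists
  exact hx hfx.ne'

instance neZero_volume_restrict_Ioi (α : ℝ) : NeZero (volume.restrict (Ioi α)) :=
  ⟨by simp⟩

lemma one_sub_Phi_pos (α : ℝ) : 0 < 1 - Phi α := by
  rw [← integral_Ioi_phi]
  exact integral_pos_of_ae_pos integrable_phi.integrableOn (ae_of_all _ phi_pos)

lemma lam_pos (α : ℝ) : 0 < lam α :=
  div_pos (phi_pos α) (one_sub_Phi_pos α)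

lemma lt_lam (α : ℝ) : α < lam α := by
  have hpos : 0 < ∫ x in Ioi α, x * phi x - α * phi x := by
    refine integral_pos_of_ae_pos ?_ (ae_restrict_of_forall_mem measurableSet_Ioi
      fun x hx => ?_)
    · exact integrable_mul_phi.integrableOn.sub (integrable_phi.const_mul α).integrableOn
    · rw [← sub_mul]
      exact mul_pos (sub_pos.2 hx) (phi_pos x)
  rw [integral_sub integrable_mul_phi.integrableOn (integrable_phi.const_mul α).integrableOn,
    integral_const_mul, integral_Ioi_mul_phi, integral_Ioi_phi] at hpos
  rw [lam, lt_div_iff₀ (one_sub_Phi_pos α)]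
  linarith

lemma lam_mul_sub_lt_one (α : ℝ) : lam α * (lam α - α) < 1 := by
  have hS := one_sub_Phi_pos α
  have hphi : phi α = lam α * (1 - Phi α) := by
    rw [lam, div_mul_cancel₀ _ hS.ne']
  have hvar : ∫ x in Ioi α, (x - lam α) ^ 2 * phi x
      = (1 - Phi α) * (1 - lam α * (lam α - α)) := by
    rw [integral_Ioi_sq_sub_mul_phi, hphi]
    ring
  have hpos : 0 < ∫ x in Ioi α, (x - lam α) ^ 2 * phi x := by
    refine integral_pos_of_ae_pos (integrable_sq_sub_mul_phi _).integrableOn ?_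
    filter_upwards [ae_restrict_of_ae (Measure.ae_ne volume (lam α))] with x hx
    exact mul_pos (sq_pos_of_ne_zero (sub_ne_zero.2 hx)) (phi_pos x)
  rw [hvar] at hpos
  linarith [pos_of_mul_pos_right hpos hS.le]

lemma setIntegral_gaussianReal (f : ℝ → ℝ) (s : Set ℝ) :
    ∫ z in s, f z ∂gaussianReal 0 1 = ∫ z in s, f z * phi z := by
  rw [gaussianReal_of_var_ne_zero 0 one_ne_zero,
    setIntegral_withDensity_eq_setIntegral_toReal_smul₀' s
      (measurable_gaussianPDF 0 1).aemeasurable (ae_of_all _ fun _ => gaussianPDF_lt_top)]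
  simp only [toReal_gaussianPDF, gaussianPDFReal_zero_one, smul_eq_mul, mul_comm]

lemma gaussianReal_Ioi_toReal (α : ℝ) : (gaussianReal 0 1 (Ioi α)).toReal = 1 - Phi α := by
  rw [gaussianReal_apply_eq_integral 0 one_ne_zero, gaussianPDFReal_zero_one,
    ENNReal.toReal_ofReal (integral_nonneg fun x => (phi_pos x).le), integral_Ioi_phi]

/-- For `Z ~ N(0,1)`, the conditional variance
`Var(Z | Z > α) = E[Z² | Z > α] − (E[Z | Z > α])² = 1 − λ(α)(λ(α) − α)`,
and this quantity lies strictly between `0` and `1`. -/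
theorem truncated_std_normal_variance (α : ℝ) :
    (∫ z in Ioi α, z ^ 2 ∂(gaussianReal 0 1)) / ((gaussianReal 0 1) (Ioi α)).toReal
        - ((∫ z in Ioi α, z ∂(gaussianReal 0 1)) / ((gaussianReal 0 1) (Ioi α)).toReal) ^ 2
      = 1 - lam α * (lam α - α)
    ∧ 0 < 1 - lam α * (lam α - α)
    ∧ 1 - lam α * (lam α - α) < 1 := by
  rw [gaussianReal_Ioi_toReal, setIntegral_gaussianReal, setIntegral_gaussianReal,
    integral_Ioi_sq_mul_phi, integral_Ioi_mul_phi]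
  refine ⟨?_, by linarith [lam_mul_sub_lt_one α], ?_⟩
  · have hS := (one_sub_Phi_pos α).ne'
    unfold lam
    field_simp
    ring
  · linarith [mul_pos (lam_pos α) (sub_pos.2 (lt_lam α))]
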